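/- Let k be an algebraically closed field of characteristic p > 0 and let ρ: G → GL(V) be a finite-dimensional representation of a finite group G. Let H be a normal subgroup of G such that the restriction ρ|_H is adequate. If H^1(G,k) = 0 (e.g., if G/H has order prime to p), then ρ is adequate for G. -/

import Mathlib

/-! Inflation–restriction gives an exact sequence
`H¹(G/H, End_H V) → H¹(G, End V) → H¹(H, End V)`, whose right term vanishes by (A3) for `H`.
Since `ρ(H)` spans `End V`, an `H`-equivariant endomorphism is central in `End V`, so `G/H` acts
trivially on `End_H V` and the left term is `Hom(G/H, End_H V)`. That embeds in `Hom(G, End_H V)`,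
which vanishes because `Hom(G, k) = H¹(G, k) = 0` and linear functionals separate points.
(A1) is inherited from `H`, and (A4) because the semisimple elements of `ρ(H)` are among those
of `ρ(G)`. -/

/-- A representation `ρ : G → GL(V)` over a field `k` of characteristic `p` is *adequate* if
(A1) `p ∤ dim V`, (A2) `H¹(G,k) = 0`, (A3) `Ext¹_G(V,V) ≅ H¹(G, V* ⊗ V) = 0`, and (A4) the
linear span of the semisimple elements of `ρ(G)` is all of `End(V)`. -/
def Adequate {k G V : Type} [Field k] [Group G] [AddCommGroup V] [Module k V]
    [FiniteDimensional k V] (p : ℕ) (ρ : Representation k G V) : Prop :=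
  (¬ p ∣ Module.finrank k V) ∧
  Subsingleton (groupCohomology.H1 (Rep.trivial k G k)) ∧
  Subsingleton (groupCohomology.H1 (Rep.of (ρ.linHom ρ))) ∧
  Submodule.span k {f : V →ₗ[k] V | ∃ g : G, ρ g = f ∧ Module.End.IsSemisimple f} = ⊤

open CategoryTheory Limits groupCohomology

universe u

lemma Commute.of_span_eq_top {R A : Type*} [CommSemiring R] [Semiring A] [Algebra R A]
    {s : Set A} (hs : Submodule.span R s = ⊤) {a : A} (ha : ∀ b ∈ s, Commute b a) (b : A) :
    Commute b a := by
  have hle : Submodule.span R s ≤ Subalgebra.toSubmodule (Subalgebra.centralizer R {a}) :=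
    Submodule.span_le.2 fun c hc ↦ (Subalgebra.mem_centralizer_iff R).2 fun _ h ↦
      (Set.mem_singleton_iff.1 h ▸ (ha c hc).symm).eq
  exact ((Subalgebra.mem_centralizer_iff R).1 (hle (hs ▸ Submodule.mem_top)) a rfl).symm

namespace Representation

variable {k G V : Type*} [CommRing k] [Group G] [AddCommGroup V] [Module k V]

lemma linHom_self_apply_eq_self_iff (ρ : Representation k G V) (g : G) (φ : Module.End k V) :
    ρ.linHom ρ g φ = φ ↔ Commute (ρ g) φ := by
  rw [linHom.mem_invariants_iff_comm (X := Rep.of ρ) (Y := Rep.of ρ) φ g]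
  exact eq_comm

lemma isTrivial_quotientToInvariants_linHom_self (ρ : Representation k G V) (S : Subgroup G)
    [S.Normal] (hS : Submodule.span k (Set.range (ρ.comp S.subtype)) = ⊤) :
    ((ρ.linHom ρ).quotientToInvariants S).IsTrivial where
  out q := by
    induction q using QuotientGroup.induction_on with | H g => ?_
    ext ⟨φ, hφ⟩ : 2
    have hcentral : ∀ ψ : Module.End k V, Commute ψ φ :=
      Commute.of_span_eq_top hS fun _ ⟨s, hs⟩ ↦ hs ▸ (ρ.linHom_self_apply_eq_self_iff s φ).1 (hφ s)
    exact (ρ.linHom_self_apply_eq_self_iff g φ).2 (hcentral _)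

end Representation

namespace groupCohomology

lemma subsingleton_addMonoidHom_of_subsingleton_H1_trivial {k G : Type u} [Field k] [Group G]
    (h : Subsingleton (H1 (Rep.trivial k G k))) (W : Type*) [AddCommGroup W] [Module k W] :
    Subsingleton (Additive G →+ W) := by
  have : Subsingleton (Additive G →+ k) :=
    (H1IsoOfIsTrivial (Rep.trivial k G k)).toLinearEquiv.symm.subsingleton
  suffices ∀ φ : Additive G →+ W, φ = 0 from ⟨fun φ ψ ↦ by rw [this φ, this ψ]⟩
  intro φ
  ext x
  refine (Module.forall_dual_apply_eq_zero_iff k (φ x)).1 fun ℓ ↦ ?_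
  exact DFunLike.congr_fun (Subsingleton.elim (ℓ.toAddMonoidHom.comp φ) 0) x

lemma subsingleton_H1_of_isTrivial_of_surjective {k G Q : Type u} [Field k] [Group G] [Group Q]
    (h : Subsingleton (H1 (Rep.trivial k G k))) {f : G →* Q} (hf : Function.Surjective f)
    (B : Rep k Q) [B.IsTrivial] : Subsingleton (H1 B) := by
  have := subsingleton_addMonoidHom_of_subsingleton_H1_trivial h B
  have : Subsingleton (Additive Q →+ B) := Function.Injective.subsingleton fun _ _ ↦
    (AddMonoidHom.cancel_right (f := MonoidHom.toAdditive f) hf).1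
  exact (H1IsoOfIsTrivial B).toLinearEquiv.subsingleton

lemma subsingleton_H1_of_quotientToInvariants_of_res {k G : Type u} [CommRing k] [Group G]
    (A : Rep k G) (S : Subgroup G) [S.Normal]
    (hquot : Subsingleton (H1 (A.quotientToInvariants S)))
    (hres : Subsingleton (H1 (Rep.res S.subtype A))) :
    Subsingleton (H1 A) := by
  have hX₁ : IsZero (H1InfRes A S).X₁ := ModuleCat.isZero_of_subsingleton (H1 _)
  have hX₃ : IsZero (H1InfRes A S).X₃ := ModuleCat.isZero_of_subsingleton (H1 _)
  exact ModuleCat.subsingleton_of_isZero <|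
    (H1InfRes_exact A S).isZero_X₂ (hX₁.eq_of_src _ _) (hX₃.eq_of_tgt _ _)

end groupCohomology

theorem stmt5_general {k : Type} [Field k] {p : ℕ}
    {G : Type} [Group G] (H : Subgroup G) [H.Normal]
    {V : Type} [AddCommGroup V] [Module k V] [FiniteDimensional k V]
    (ρ : Representation k G V)
    (hH : Adequate p (ρ.comp H.subtype))
    (h1 : Subsingleton (groupCohomology.H1 (Rep.trivial k G k))) :
    Adequate p ρ := by
  obtain ⟨hdim, -, hExt, hspan⟩ := hH
  have hspan_range : Submodule.span k (Set.range (ρ.comp H.subtype)) = ⊤ :=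
    top_unique (hspan ▸ Submodule.span_mono fun _ ⟨h, hh, _⟩ ↦ ⟨h, hh⟩)
  refine ⟨hdim, h1, ?_, top_unique <|
    hspan ▸ Submodule.span_mono fun _ ⟨h, hh, hss⟩ ↦ ⟨h, hh, hss⟩⟩
  have := ρ.isTrivial_quotientToInvariants_linHom_self H hspan_range
  -- `hExt` is about `Rep.res H.subtype (Rep.of (ρ.linHom ρ))`, up to unfolding definitions.
  exact subsingleton_H1_of_quotientToInvariants_of_res _ H
    (subsingleton_H1_of_isTrivial_of_surjective h1 (QuotientGroup.mk'_surjective H) _) hExt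

/-- If `H ◁ G`, the restriction of `ρ` to `H` is adequate, and `H¹(G,k) = 0` (e.g. if `G/H`
has order prime to `p`), then `ρ` is adequate for `G`. -/
theorem stmt5 {k : Type} [Field k] [IsAlgClosed k] {p : ℕ} [Fact p.Prime] [CharP k p]
    {G : Type} [Group G] [Finite G] (H : Subgroup G) [H.Normal]
    {V : Type} [AddCommGroup V] [Module k V] [FiniteDimensional k V]
    (ρ : Representation k G V)
    (hH : Adequate p (ρ.comp H.subtype))
    (h1 : Subsingleton (groupCohomology.H1 (Rep.trivial k G k))) :
    Adequate p ρ :=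
  stmt5_general H ρ hH h1
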